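/- arXiv:2012.10805 — 2 statements merged into one kernel-verified Lean document; each statement's English description precedes it below -/
import Mathlib

section
/- For 0 ≤ ρ < 1, ∫₀¹ λ² √((1−λ²)(1−ρ²λ²)) dλ = (π/16) · (1 − (ρ²/8) · Σ_{n=0}^∞ (Cₙ·C_{n+2}/16ⁿ) ρ^(2n)), where Cₙ is the n-th Catalan number. -/
/-!
Expand `√(1 - ρ²λ²) = ∑ₙ (1/2 choose n) (-ρ²)ⁿ λ²ⁿ` by the binomial series, whose
coefficients are `(1/2 choose n+1) = (-1)ⁿ Cₙ / (2·4ⁿ)`, and integrate term by term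
(dominated convergence; the coefficient series is absolutely summable for `ρ² < 1`).
The substitution `λ = sin θ` turns the moments into Wallis integrals:
`∫₀¹ λ²ᵐ √(1 - λ²) dλ = π Cₘ / 4ᵐ⁺¹`.
-/

open Real MeasureTheory

theorem succ_succ_mul_catalan_succ (n : ℕ) :
    (n + 2) * catalan (n + 1) = 2 * (2 * n + 1) * catalan n := by
  have h := Nat.succ_mul_centralBinom_succ n
  rw [← succ_mul_catalan_eq_centralBinom, ← succ_mul_catalan_eq_centralBinom] at h
  apply Nat.eq_of_mul_eq_mul_left n.succ_pos
  linarith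

theorem integral_sin_pow_even_zero_pi_div_two (m : ℕ) :
    ∫ x in (0 : ℝ)..π / 2, sin x ^ (2 * m) = π / 2 * m.centralBinom / 4 ^ m := by
  induction m with
  | zero => simp
  | succ m ih =>
    have h : ((m : ℝ) + 1) * (m + 1).centralBinom = 2 * (2 * m + 1) * m.centralBinom := by
      exact_mod_cast Nat.succ_mul_centralBinom_succ m
    rw [mul_add_one, integral_sin_pow, ih]
    simp only [sin_pi_div_two, cos_pi_div_two, sin_zero]
    field_simp
    push_cast
    linear_combination (-2 * π * (4 : ℝ) ^ m) * h

theorem integral_sin_pow_even_mul_cos_sq_zero_pi_div_two (m : ℕ) :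
    ∫ x in (0 : ℝ)..π / 2, sin x ^ (2 * m) * cos x ^ 2 = π * catalan m / 4 ^ (m + 1) := by
  have hrec := integral_sin_pow (a := 0) (b := π / 2) (2 * m)
  simp only [sin_pi_div_two, cos_pi_div_two, sin_zero] at hrec
  have hC : ((m : ℝ) + 1) * catalan m = m.centralBinom := by
    exact_mod_cast succ_mul_catalan_eq_centralBinom m
  simp_rw [cos_sq', mul_sub, mul_one, ← pow_add]
  rw [intervalIntegral.integral_sub (by apply Continuous.intervalIntegrable; fun_prop)
      (by apply Continuous.intervalIntegrable; fun_prop), hrec,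
    integral_sin_pow_even_zero_pi_div_two, ← hC]
  field_simp
  push_cast
  ring

theorem integral_pow_even_mul_sqrt_one_sub_sq (m : ℕ) :
    ∫ x in (0 : ℝ)..1, x ^ (2 * m) * √(1 - x ^ 2) = π * catalan m / 4 ^ (m + 1) := by
  have hsubst := intervalIntegral.integral_comp_mul_deriv (a := 0) (b := π / 2)
    (g := fun x => x ^ (2 * m) * √(1 - x ^ 2)) (fun x _ => hasDerivAt_sin x)
    continuous_cos.continuousOn (by fun_prop)
  rw [sin_zero, sin_pi_div_two] at hsubst
  rw [← hsubst, ← integral_sin_pow_even_mul_cos_sq_zero_pi_div_two]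
  refine intervalIntegral.integral_congr fun x hx => ?_
  rw [Set.uIcc_of_le (by positivity)] at hx
  have hcos : √(1 - sin x ^ 2) = cos x := by
    rw [← cos_sq', sqrt_sq (cos_nonneg_of_mem_Icc ⟨by linarith [hx.1, pi_pos], hx.2⟩)]
  simp only [Function.comp, hcos]
  ring

theorem Ring.choose_succ_mul_succ {K : Type*} [Field K] [CharZero K] (a : K) (n : ℕ) :
    Ring.choose a (n + 1) * (n + 1) = Ring.choose a n * (a - n) := by
  rw [Ring.choose_eq_smul, Ring.choose_eq_smul, descPochhammer_succ_right, Polynomial.smeval_mul,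
    Polynomial.smeval_sub, Polynomial.smeval_X, Polynomial.smeval_natCast, Nat.factorial_succ]
  simp only [pow_one, pow_zero, nsmul_eq_mul, mul_one, smul_eq_mul]
  push_cast
  field_simp

theorem Ring.choose_half_succ (n : ℕ) :
    Ring.choose (1 / 2 : ℝ) (n + 1) = (-1) ^ n * catalan n / (2 * 4 ^ n) := by
  induction n with
  | zero => simp
  | succ n ih =>
    have hrec := Ring.choose_succ_mul_succ (1 / 2 : ℝ) (n + 1)
    have hC : ((n : ℝ) + 2) * catalan (n + 1) = 2 * (2 * n + 1) * catalan n := by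
      exact_mod_cast succ_succ_mul_catalan_succ n
    rw [ih] at hrec
    push_cast at hrec
    have hn : (n : ℝ) + 2 ≠ 0 := by positivity
    field_simp at hrec ⊢
    apply mul_right_cancel₀ hn
    linear_combination 2 * hrec - (-1) ^ (n + 1) * hC

theorem Ring.choose_half_succ_mul_neg_pow (n : ℕ) (x : ℝ) :
    Ring.choose (1 / 2 : ℝ) (n + 1) * (-x) ^ (n + 1) =
      -(catalan n / (2 * 4 ^ n) * x ^ (n + 1)) := by
  rw [Ring.choose_half_succ, neg_pow x, pow_succ (-1 : ℝ)]
  have : ((-1 : ℝ) ^ n) ^ 2 = 1 := by rw [← pow_mul, mul_comm, pow_mul]; simp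
  linear_combination (-(catalan n / (2 * 4 ^ n) * x ^ (n + 1))) * this

theorem Real.hasSum_choose_mul_pow (a : ℝ) {x : ℝ} (hx : |x| < 1) :
    HasSum (fun n => Ring.choose a n * x ^ n) ((1 + x) ^ a) := by
  have hx' : ‖x‖ₑ < 1 := by rwa [← ofReal_norm, norm_eq_abs, ENNReal.ofReal_lt_one]
  have h := (one_add_rpow_hasFPowerSeriesOnBall_zero (a := a)).hasSum (y := x)
  simpa [binomialSeries, mul_comm, hx'] using h

theorem Real.summable_abs_choose_mul_pow (a : ℝ) {x : ℝ} (hx : |x| < 1) :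
    Summable fun n => |Ring.choose a n * x ^ n| := by
  have hx' : (‖x‖₊ : ENNReal) < 1 :=
    ENNReal.coe_lt_one_iff.2 (by rwa [← NNReal.coe_lt_one, coe_nnnorm, norm_eq_abs])
  have h := (binomialSeries ℝ a).summable_norm_mul_pow
    (hx'.trans_le binomialSeries_radius_ge_one)
  simpa [binomialSeries, abs_mul] using h

theorem Real.sqrt_one_add_eq_tsum {x : ℝ} (hx : |x| < 1) :
    √(1 + x) = ∑' n, Ring.choose (1 / 2 : ℝ) n * x ^ n := by
  rw [sqrt_eq_rpow, (hasSum_choose_mul_pow _ hx).tsum_eq]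

theorem intervalIntegral.hasSum_integral_tsum_mul_pow_mul {a b : ℝ} {c : ℕ → ℝ}
    {u g : ℝ → ℝ} (hc : Summable fun n => |c n|) (hu : ContinuousOn u (Set.uIcc a b))
    (hu_le : ∀ x ∈ Set.uIcc a b, |u x| ≤ 1) (hg : IntervalIntegrable g volume a b) :
    HasSum (fun n => c n * ∫ x in a..b, u x ^ n * g x)
      (∫ x in a..b, (∑' n, c n * u x ^ n) * g x) := by
  have hcu_le : ∀ x ∈ Set.uIoc a b, ∀ n, |c n * u x ^ n| ≤ |c n| := fun x hx n => by
    rw [abs_mul, abs_pow]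
    exact mul_le_of_le_one_right (abs_nonneg _)
      (pow_le_one₀ (abs_nonneg _) (hu_le x (Set.uIoc_subset_uIcc hx)))
  simp_rw [← intervalIntegral.integral_const_mul]
  refine intervalIntegral.hasSum_integral_of_dominated_convergence (fun n x => |c n| * |g x|)
    (fun n => ((hg.continuousOn_mul (hu.pow n)).const_mul (c n)).def'.aestronglyMeasurable)
    (fun n => .of_forall fun x hx => ?_) (.of_forall fun x _ => hc.mul_right _) ?_
    (.of_forall fun x hx => ?_)
  · rw [← mul_assoc, norm_mul, norm_eq_abs, norm_eq_abs]
    exact mul_le_mul_of_nonneg_right (hcu_le x hx n) (abs_nonneg _)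
  · simpa [tsum_mul_right] using hg.norm.const_mul _
  · simp_rw [← mul_assoc]
    exact ((hc.of_norm_bounded (hcu_le x hx)).hasSum).mul_right (g x)

theorem hasSum_integral_sq_mul_sqrt_one_sub_sq_mul_one_add {x : ℝ} (hx : |x| < 1) :
    HasSum (fun n => Ring.choose (1 / 2 : ℝ) n * x ^ n * (π * catalan (n + 1) / 4 ^ (n + 2)))
      (∫ l in (0 : ℝ)..1, l ^ 2 * √((1 - l ^ 2) * (1 + x * l ^ 2))) := by
  have hl_sq : ∀ l ∈ Set.uIcc (0 : ℝ) 1, |l ^ 2| ≤ 1 := fun l hl => by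
    rw [Set.uIcc_of_le zero_le_one] at hl
    rw [abs_of_nonneg (by positivity)]
    exact pow_le_one₀ hl.1 hl.2
  have hintegrand : ∀ l ∈ Set.uIcc (0 : ℝ) 1,
      (∑' n, Ring.choose (1 / 2 : ℝ) n * x ^ n * (l ^ 2) ^ n) * (l ^ 2 * √(1 - l ^ 2)) =
        l ^ 2 * √((1 - l ^ 2) * (1 + x * l ^ 2)) := fun l hl => by
    have hxl : |x * l ^ 2| < 1 := by
      rw [abs_mul]
      exact (mul_le_of_le_one_right (abs_nonneg _) (hl_sq l hl)).trans_lt hx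
    have hl2 : l ^ 2 ≤ 1 := (le_abs_self _).trans (hl_sq l hl)
    simp_rw [mul_assoc, ← mul_pow, ← Real.sqrt_one_add_eq_tsum hxl,
      sqrt_mul (by linarith : 0 ≤ 1 - l ^ 2)]
    ring
  have hmoment : ∀ n, ∫ l in (0 : ℝ)..1, (l ^ 2) ^ n * (l ^ 2 * √(1 - l ^ 2)) =
      π * catalan (n + 1) / 4 ^ (n + 2) := fun n => by
    rw [← integral_pow_even_mul_sqrt_one_sub_sq]
    congr 1 with l
    ring
  have h := intervalIntegral.hasSum_integral_tsum_mul_pow_mul (a := 0) (b := 1)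
    (u := fun l => l ^ 2) (g := fun l => l ^ 2 * √(1 - l ^ 2))
    (summable_abs_choose_mul_pow (1 / 2) hx) (by fun_prop) hl_sq
    (by apply Continuous.intervalIntegrable; fun_prop)
  rw [intervalIntegral.integral_congr hintegrand] at h
  simpa only [hmoment] using h

theorem integral_lambda_sq_sqrt_prod (ρ : ℝ) (h0 : 0 ≤ ρ) (h1 : ρ < 1) :
    ∫ l in (0:ℝ)..1, l ^ 2 * Real.sqrt ((1 - l ^ 2) * (1 - ρ ^ 2 * l ^ 2)) =
      (Real.pi / 16) *
        (1 - (ρ ^ 2 / 8) *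
          ∑' n : ℕ, ((catalan n : ℝ) * (catalan (n + 2)) / 16 ^ n) * ρ ^ (2 * n)) := by
  have hρ : |-ρ ^ 2| < 1 := by rw [abs_neg, abs_of_nonneg (by positivity)]; nlinarith
  have h := hasSum_integral_sq_mul_sqrt_one_sub_sq_mul_one_add hρ
  simp only [neg_mul, ← sub_eq_add_neg] at h
  have htail : ∀ n, Ring.choose (1 / 2 : ℝ) (n + 1) * (-ρ ^ 2) ^ (n + 1) *
        (π * catalan (n + 1 + 1) / 4 ^ (n + 1 + 2)) =
      -(π / 16 * (ρ ^ 2 / 8)) *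
        ((catalan n : ℝ) * catalan (n + 2) / 16 ^ n * ρ ^ (2 * n)) := by
    intro n
    have h16 : (16 : ℝ) ^ n = 4 ^ n * 4 ^ n := by rw [← mul_pow]; norm_num
    rw [Ring.choose_half_succ_mul_neg_pow, h16]
    field_simp
    ring
  rw [← h.tsum_eq, h.summable.tsum_eq_zero_add, tsum_congr htail, tsum_mul_left]
  simp only [Ring.choose_zero_right, pow_zero, zero_add, catalan_one, Nat.cast_one]
  ring
end

section
/- For 0 ≤ ρ < 1, ∫₀¹ √((1−λ²)(1−ρ²λ²)) dλ = (π/4) · (1 − (ρ²/8) · Σ_{n=0}^∞ (Cₙ·C_{n+1}/16ⁿ) ρ^(2n)), where Cₙ is the n-th Catalan number. -/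
open Real MeasureTheory Finset

/-!
Write the integrand as `√(1 - λ²) · √(1 - ρ²λ²)` and expand the second factor through the
Catalan generating function `C(x) = ∑ Cₙ xⁿ`: it satisfies `C = 1 + x C²`, hence
`√(1 - 4x) = 1 - 2x C(x)` on `[0, 1/4]`, the sign being fixed by `C(1/4) ≤ 2`, which follows
from the telescoping partial sums `∑_{n<N} Cₙ / 4ⁿ = 2 - 2 binom(2N, N) / 4ᴺ`. The same bound
dominates the series uniformly in `λ`, so it can be integrated termwise, and the substitution
`λ = sin θ` turns the moments into Wallis integrals: `∫₀¹ λ^{2k} √(1 - λ²) dλ = (π/4) Cₖ / 4ᵏ`.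
-/

theorem centralBinom_succ_eq_four_mul_sub_two_mul_catalan (n : ℕ) :
    ((n + 1).centralBinom : ℝ) = 4 * n.centralBinom - 2 * catalan n := by
  have hcb : ((n + 1 : ℕ) : ℝ) * (n + 1).centralBinom = 2 * (2 * n + 1) * n.centralBinom := by
    exact_mod_cast Nat.succ_mul_centralBinom_succ n
  have hcat : ((n + 1 : ℕ) : ℝ) * catalan n = n.centralBinom := by
    exact_mod_cast succ_mul_catalan_eq_centralBinom n
  push_cast at hcb hcat
  apply mul_left_cancel₀ (by positivity : (n : ℝ) + 1 ≠ 0)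
  linear_combination hcb + 2 * hcat

theorem sum_range_catalan_div_four_pow (N : ℕ) :
    ∑ n ∈ range N, (catalan n : ℝ) / 4 ^ n = 2 - 2 * N.centralBinom / 4 ^ N := by
  induction N with
  | zero => norm_num
  | succ N ih =>
    rw [sum_range_succ, ih, centralBinom_succ_eq_four_mul_sub_two_mul_catalan, pow_succ]
    field_simp
    ring

theorem summable_catalan_div_four_pow : Summable fun n ↦ (catalan n : ℝ) / 4 ^ n :=
  summable_of_sum_range_le (c := 2) (fun _ ↦ by positivity) fun N ↦ by
    rw [sum_range_catalan_div_four_pow]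
    exact sub_le_self 2 (by positivity)

theorem catalan_mul_pow_le {x : ℝ} (hx₀ : 0 ≤ x) (hx : x ≤ 1 / 4) (n : ℕ) :
    (catalan n : ℝ) * x ^ n ≤ catalan n / 4 ^ n := by
  rw [div_eq_mul_one_div, ← one_div_pow]
  gcongr

theorem summable_catalan_mul_pow {x : ℝ} (hx₀ : 0 ≤ x) (hx : x ≤ 1 / 4) :
    Summable fun n ↦ (catalan n : ℝ) * x ^ n :=
  summable_catalan_div_four_pow.of_nonneg_of_le (fun _ ↦ by positivity)
    (catalan_mul_pow_le hx₀ hx)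

theorem tsum_catalan_mul_pow_le_two {x : ℝ} (hx₀ : 0 ≤ x) (hx : x ≤ 1 / 4) :
    ∑' n, (catalan n : ℝ) * x ^ n ≤ 2 := by
  refine (summable_catalan_mul_pow hx₀ hx).tsum_le_tsum (catalan_mul_pow_le hx₀ hx)
    summable_catalan_div_four_pow |>.trans ?_
  refine Real.tsum_le_of_sum_range_le (fun _ ↦ by positivity) fun N ↦ ?_
  rw [sum_range_catalan_div_four_pow]
  exact sub_le_self 2 (by positivity)

theorem tsum_catalan_mul_pow_eq_one_add_mul_sq {x : ℝ} (hx₀ : 0 ≤ x) (hx : x ≤ 1 / 4) :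
    ∑' n, (catalan n : ℝ) * x ^ n = 1 + x * (∑' n, (catalan n : ℝ) * x ^ n) ^ 2 := by
  have hs := summable_catalan_mul_pow hx₀ hx
  have hnorm : Summable fun n ↦ ‖(catalan n : ℝ) * x ^ n‖ := by
    simpa only [Real.norm_eq_abs] using hs.abs
  have hprod :
      (∑' n, (catalan n : ℝ) * x ^ n) ^ 2 = ∑' n, (catalan (n + 1) : ℝ) * x ^ n := by
    rw [sq, tsum_mul_tsum_eq_tsum_sum_antidiagonal_of_summable_norm hnorm hnorm]
    refine tsum_congr fun n ↦ ?_
    rw [catalan_succ', Nat.cast_sum, sum_mul]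
    refine sum_congr rfl fun ij hij ↦ ?_
    rw [← mem_antidiagonal.mp hij]
    push_cast
    ring
  rw [hprod, hs.tsum_eq_zero_add, ← tsum_mul_left]
  simp only [catalan_zero, Nat.cast_one, pow_zero, mul_one, pow_succ]
  congr 1
  exact tsum_congr fun n ↦ by ring

theorem hasSum_sqrt_one_sub_four_mul {x : ℝ} (hx₀ : 0 ≤ x) (hx : x ≤ 1 / 4) :
    HasSum (fun n ↦ -2 * catalan n * x ^ (n + 1)) (√(1 - 4 * x) - 1) := by
  set S := ∑' n, (catalan n : ℝ) * x ^ n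
  have hS : S = 1 + x * S ^ 2 := tsum_catalan_mul_pow_eq_one_add_mul_sq hx₀ hx
  have hsq : 1 - 4 * x = (1 - 2 * x * S) ^ 2 := by linear_combination 4 * x * hS
  -- `S ≤ 2` selects the root of the quadratic with `1 - 2 * x * S ≥ 0`.
  have hxS : x * S ≤ x * 2 :=
    mul_le_mul_of_nonneg_left (tsum_catalan_mul_pow_le_two hx₀ hx) hx₀
  rw [hsq, Real.sqrt_sq (by linarith)]
  have hterm : (fun n ↦ -2 * (catalan n : ℝ) * x ^ (n + 1)) =
      fun n ↦ -2 * x * ((catalan n : ℝ) * x ^ n) := funext fun n ↦ by ring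
  rw [hterm, show 1 - 2 * x * S - 1 = -2 * x * S by ring]
  exact (summable_catalan_mul_pow hx₀ hx).hasSum.mul_left (-2 * x)

theorem integral_sin_pow_add_two_pi_div_two (n : ℕ) :
    ∫ θ in (0 : ℝ)..π / 2, sin θ ^ (n + 2) =
      (n + 1) / (n + 2) * ∫ θ in (0 : ℝ)..π / 2, sin θ ^ n := by
  simp [integral_sin_pow]

theorem integral_sin_pow_even_pi_div_two (k : ℕ) :
    ∫ θ in (0 : ℝ)..π / 2, sin θ ^ (2 * k) = π / 2 * k.centralBinom / 4 ^ k := by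
  induction k with
  | zero => simp
  | succ k ih =>
    have hcb : ((k + 1 : ℕ) : ℝ) * (k + 1).centralBinom = 2 * (2 * k + 1) * k.centralBinom := by
      exact_mod_cast Nat.succ_mul_centralBinom_succ k
    push_cast at hcb
    rw [mul_add_one, integral_sin_pow_add_two_pi_div_two, ih, pow_succ]
    push_cast
    field_simp
    linear_combination -2 * hcb

theorem integral_pow_mul_sqrt_one_sub_sq (k : ℕ) :
    ∫ x in (0 : ℝ)..1, x ^ (2 * k) * √(1 - x ^ 2) = π / 4 * catalan k / 4 ^ k := by
  have hsubst := intervalIntegral.integral_comp_mul_deriv (a := 0) (b := π / 2)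
    (fun θ _ ↦ hasDerivAt_sin θ) continuous_cos.continuousOn
    (g := fun x ↦ x ^ (2 * k) * √(1 - x ^ 2)) (by fun_prop)
  rw [sin_zero, sin_pi_div_two] at hsubst
  have hintegrand : ∀ θ ∈ Set.uIcc 0 (π / 2),
      ((fun x ↦ x ^ (2 * k) * √(1 - x ^ 2)) ∘ sin) θ * cos θ =
        sin θ ^ (2 * k) - sin θ ^ (2 * k + 2) := by
    intro θ hθ
    rw [Set.uIcc_of_le (by positivity)] at hθ
    have hcos : 0 ≤ cos θ := cos_nonneg_of_mem_Icc ⟨by linarith [hθ.1, pi_pos], hθ.2⟩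
    simp only [Function.comp_apply, ← cos_sq', sqrt_sq hcos]
    linear_combination sin θ ^ (2 * k) * sin_sq_add_cos_sq θ
  have hcat : ((k + 1 : ℕ) : ℝ) * catalan k = k.centralBinom := by
    exact_mod_cast succ_mul_catalan_eq_centralBinom k
  push_cast at hcat
  rw [← hsubst, intervalIntegral.integral_congr hintegrand, intervalIntegral.integral_sub
    (by apply Continuous.intervalIntegrable; fun_prop)
    (by apply Continuous.intervalIntegrable; fun_prop),
    integral_sin_pow_add_two_pi_div_two,
    integral_sin_pow_even_pi_div_two, ← hcat]
  push_cast
  field_simp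
  ring

theorem abs_pow_mul_sqrt_one_sub_sq_le {l : ℝ} (hl : |l| ≤ 1) (m : ℕ) :
    |l ^ m * √(1 - l ^ 2)| ≤ 1 := by
  rw [abs_mul, abs_pow, abs_of_nonneg (sqrt_nonneg _)]
  exact mul_le_one₀ (pow_le_one₀ (abs_nonneg l) hl) (sqrt_nonneg _)
    (sqrt_le_one.mpr (by nlinarith [sq_nonneg l]))

theorem abs_catalan_mul_pow_le {ρ : ℝ} (hρ : ρ ^ 2 ≤ 1) (k : ℕ) :
    |-2 * catalan k * (ρ ^ 2 / 4) ^ (k + 1)| ≤ (catalan k : ℝ) / 4 ^ k := by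
  rw [abs_mul, abs_mul, abs_of_nonneg (by positivity : 0 ≤ (ρ ^ 2 / 4) ^ (k + 1))]
  calc |(-2 : ℝ)| * |(catalan k : ℝ)| * (ρ ^ 2 / 4) ^ (k + 1)
      ≤ 2 * catalan k * (1 / 4) ^ (k + 1) := by norm_num; gcongr
    _ ≤ catalan k / 4 ^ k := by
      rw [one_div_pow, pow_succ]
      field_simp
      linarith [Nat.cast_nonneg (α := ℝ) (catalan k)]

theorem hasSum_sqrt_one_sub_sq_mul {ρ l : ℝ} (hρ : ρ ^ 2 ≤ 1) (hl : |l| ≤ 1) :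
    HasSum
      (fun k ↦ -2 * catalan k * (ρ ^ 2 / 4) ^ (k + 1) * (l ^ (2 * (k + 1)) * √(1 - l ^ 2)))
      (√((1 - l ^ 2) * (1 - ρ ^ 2 * l ^ 2)) - √(1 - l ^ 2)) := by
  have hl2 : l ^ 2 ≤ 1 := by nlinarith [sq_abs l, abs_nonneg l]
  have h := (hasSum_sqrt_one_sub_four_mul (x := ρ ^ 2 * l ^ 2 / 4) (by positivity)
    (by nlinarith [sq_nonneg ρ, sq_nonneg l])).mul_right √(1 - l ^ 2)
  have hterm :
      (fun k ↦ -2 * catalan k * (ρ ^ 2 / 4) ^ (k + 1) * (l ^ (2 * (k + 1)) * √(1 - l ^ 2))) =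
        fun k ↦ -2 * catalan k * (ρ ^ 2 * l ^ 2 / 4) ^ (k + 1) * √(1 - l ^ 2) :=
    funext fun k ↦ by
      rw [pow_mul, show ρ ^ 2 * l ^ 2 / 4 = ρ ^ 2 / 4 * l ^ 2 by ring, mul_pow]
      ring
  rw [hterm, sqrt_mul (by linarith),
    show 1 - ρ ^ 2 * l ^ 2 = 1 - 4 * (ρ ^ 2 * l ^ 2 / 4) by ring]
  rwa [sub_one_mul, mul_comm (√(1 - 4 * _))] at h

theorem hasSum_integral_sqrt_one_sub_sq_mul {ρ : ℝ} (hρ : ρ ^ 2 ≤ 1) :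
    HasSum
      (fun k ↦ -(π / 4) * (ρ ^ 2 / 8) * ((catalan k : ℝ) * catalan (k + 1) / 16 ^ k * ρ ^ (2 * k)))
      ((∫ l in (0 : ℝ)..1, √((1 - l ^ 2) * (1 - ρ ^ 2 * l ^ 2))) - π / 4) := by
  have habs : ∀ l ∈ Set.uIoc (0 : ℝ) 1, |l| ≤ 1 := fun l hl ↦ by
    rw [Set.uIoc_of_le zero_le_one] at hl
    exact abs_le.mpr ⟨by linarith [hl.1], hl.2⟩
  have h := intervalIntegral.hasSum_integral_of_dominated_convergence (a := 0) (b := 1)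
    (μ := volume) (fun k _ ↦ (catalan k : ℝ) / 4 ^ k)
    (fun _ ↦ Continuous.aestronglyMeasurable (by fun_prop))
    (fun k ↦ ae_of_all _ fun l hl ↦ by
      rw [Real.norm_eq_abs, abs_mul]
      exact (mul_le_mul (abs_catalan_mul_pow_le hρ k)
        (abs_pow_mul_sqrt_one_sub_sq_le (habs l hl) _) (abs_nonneg _) (by positivity)).trans_eq
          (mul_one _))
    (ae_of_all _ fun _ _ ↦ summable_catalan_div_four_pow) intervalIntegrable_const
    (ae_of_all _ fun l hl ↦ hasSum_sqrt_one_sub_sq_mul hρ (habs l hl))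
  have hterm : ∀ k : ℕ, ∫ l in (0 : ℝ)..1,
      -2 * catalan k * (ρ ^ 2 / 4) ^ (k + 1) * (l ^ (2 * (k + 1)) * √(1 - l ^ 2)) =
        -(π / 4) * (ρ ^ 2 / 8) * ((catalan k : ℝ) * catalan (k + 1) / 16 ^ k * ρ ^ (2 * k)) := by
    intro k
    rw [intervalIntegral.integral_const_mul, integral_pow_mul_sqrt_one_sub_sq,
      show (16 : ℝ) ^ k = 4 ^ k * 4 ^ k by rw [← mul_pow]; norm_num, div_pow, pow_mul]
    field_simp
    ring
  have hcircle : ∫ l in (0 : ℝ)..1, √(1 - l ^ 2) = π / 4 := by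
    simpa using integral_pow_mul_sqrt_one_sub_sq 0
  simp only [hterm] at h
  rwa [intervalIntegral.integral_sub (by apply Continuous.intervalIntegrable; fun_prop)
    (by apply Continuous.intervalIntegrable; fun_prop), hcircle] at h

theorem integral_sqrt_prod (ρ : ℝ) (h0 : 0 ≤ ρ) (h1 : ρ < 1) :
    ∫ l in (0:ℝ)..1, Real.sqrt ((1 - l ^ 2) * (1 - ρ ^ 2 * l ^ 2)) =
      (Real.pi / 4) *
        (1 - (ρ ^ 2 / 8) *
          ∑' n : ℕ, ((catalan n : ℝ) * (catalan (n + 1)) / 16 ^ n) * ρ ^ (2 * n)) := by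
  have hρ : ρ ^ 2 ≤ 1 := by nlinarith
  have h := (hasSum_integral_sqrt_one_sub_sq_mul hρ).tsum_eq
  rw [tsum_mul_left] at h
  linear_combination -h
end
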